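/- arXiv:1410.1168 — 3 statements merged into one kernel-verified Lean document; each statement's English description precedes it below -/
import Mathlib

section
/- Let φ and ψ be holomorphic self-maps of the unit disk D, and suppose there exist ζ_1, ζ_2 ∈ ∂D and ω ∈ ∂D such that φ has nontangential limit ω at ζ_1, ψ has nontangential limit ω at ζ_2, and the angular derivatives φ'(ζ_1) and ψ'(ζ_2) exist. Then on H^2(D), and on A^2_s(D) for s > −1, lim_{r→1⁻} ⟨C_ψ* k_{rζ_2}, C_φ* k_{rζ_1}⟩ = ( 2/(|φ'(ζ_1)| + |ψ'(ζ_2)|) )^t > 0, where t = 1 for H^2(D) and t = s+2 for A^2_s(D). Equivalently, lim_{r→1⁻} ((1−r^2)/(1−φ(rζ_1) \overline{ψ(rζ_2)}))^t = (2/(|φ'(ζ_1)|+|ψ'(ζ_2)|))^t. -/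
/-!
By the reproducing property `C_φ* K_w = K_{φ(w)}`, the inner product equals
`((1 - r²) / (1 - φ(rζ₁) conj ψ(rζ₂)))^t` exactly. Dividing numerator and denominator by `1 - r`
and writing `1 - φ conj ψ = (1 - conj ω φ) + conj ω φ · conj (1 - conj ω ψ)`, everything reduces to
the radial limits `d = lim (1 - conj ω f(rζ)) / (1 - r) = conj ω ζ f'(ζ)`. Julia–Carathéodory
identifies `d` with `|f'(ζ)| > 0`: letting `s → 1⁻` in the Schwarz–Pick inequality at `sζ, rζ` gives
Julia's inequality `(1 + r) |D(r)|² ≤ Re d · (1 - |f(rζ)|²) / (1 - r)` for the quotient `D(r)`, and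
letting `r → 1⁻` yields `|d|² ≤ (Re d)²`.
-/

open Filter MeasureTheory Metric Set
open scoped ComplexInnerProductSpace Topology

noncomputable section

/-- The open unit disk `D` in `ℂ`. -/
abbrev Disk : Set ℂ := Metric.ball 0 1

/-- An abstract presentation of a reproducing-kernel Hilbert space of holomorphic functions
on the unit disk `D` with reproducing kernel `K_w(z) = (1 - z·conj w)^{-t}`.  For `t = 1`
this is the Hardy space `H²(D)`; for `t = s + 2` (`s > -1`) it is the weighted Bergman space
`A²_s(D)`.  Injectivity of evaluation forces the kernels to be total, so such a structure
determines the space uniquely up to canonical unitary equivalence. -/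
structure DiskKernelSpace (t : ℝ) where
  (H : Type)
  [grp : NormedAddCommGroup H]
  [ips : InnerProductSpace ℂ H]
  [cpl : CompleteSpace H]
  eval : H → ℂ → ℂ
  eval_add : ∀ f g : H, ∀ z, eval (f + g) z = eval f z + eval g z
  eval_smul : ∀ (c : ℂ) (f : H) (z : ℂ), eval (c • f) z = c * eval f z
  holo : ∀ f : H, DifferentiableOn ℂ (eval f) Disk
  eval_injective : ∀ f g : H, (∀ z ∈ Disk, eval f z = eval g z) → f = g
  kernel : ℂ → H
  eval_kernel : ∀ w ∈ Disk, ∀ z ∈ Disk,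
    eval (kernel w) z = (1 - z * (starRingEnd ℂ) w) ^ (-(t : ℂ))
  reproducing : ∀ (f : H), ∀ w ∈ Disk, ⟪kernel w, f⟫ = eval f w

attribute [instance] DiskKernelSpace.grp DiskKernelSpace.ips DiskKernelSpace.cpl

/-- `T` is the composition operator `C_φ : f ↦ f ∘ φ` on `S`. -/
def DiskKernelSpace.IsCompositionOperator {t : ℝ} (S : DiskKernelSpace t)
    (φ : ℂ → ℂ) (T : S.H →L[ℂ] S.H) : Prop :=
  ∀ f : S.H, ∀ z ∈ Disk, S.eval (T f) z = S.eval f (φ z)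

/-- `f` has nontangential limit `L` at the boundary point `ζ` of the unit disk: `f(z) → L`
as `z → ζ` within every Stolz angle `{z ∈ D : |z - ζ| < M (1 - |z|)}`, `M > 1`. -/
def HasNontangentialLimit {α : Type*} [TopologicalSpace α] (f : ℂ → α) (ζ : ℂ) (L : α) :
    Prop :=
  ∀ M : ℝ, 1 < M →
    Tendsto f (𝓝[{z : ℂ | ‖z‖ < 1 ∧ ‖z - ζ‖ < M * (1 - ‖z‖)}] ζ) (𝓝 L)


open Complex ComplexConjugate

section SchwarzPick

lemma normSq_lt_one_of_mem_disk {z : ℂ} (hz : z ∈ Disk) : normSq z < 1 := by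
  rw [normSq_eq_norm_sq]
  exact pow_lt_one₀ (norm_nonneg z) (mem_ball_zero_iff.1 hz) two_ne_zero

lemma one_sub_norm_sq_pos {w : ℂ} (hw : w ∈ Disk) : 0 < 1 - ‖w‖ ^ 2 :=
  sub_pos.2 (pow_lt_one₀ (norm_nonneg w) (mem_ball_zero_iff.1 hw) two_ne_zero)

lemma one_sub_conj_mul_ne_zero {a z : ℂ} (ha : a ∈ Disk) (hz : z ∈ Disk) :
    1 - conj a * z ≠ 0 := by
  have : ‖conj a * z‖ < 1 := by
    rw [norm_mul, RCLike.norm_conj]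
    exact mul_lt_one_of_nonneg_of_lt_one_left (norm_nonneg a) (mem_ball_zero_iff.1 ha)
      (mem_ball_zero_iff.1 hz).le
  exact sub_ne_zero.2 fun h => by simp [← h] at this

lemma one_sub_mul_conj_mem_slitPlane {u v : ℂ} (hu : u ∈ Disk) (hv : v ∈ Disk) :
    1 - u * conj v ∈ slitPlane := by
  have : ‖u * conj v‖ < 1 := by
    rw [norm_mul, RCLike.norm_conj]
    exact mul_lt_one_of_nonneg_of_lt_one_left (norm_nonneg u) (mem_ball_zero_iff.1 hu)
      (mem_ball_zero_iff.1 hv).le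
  refine mem_slitPlane_iff.2 (Or.inl ?_)
  rw [sub_re, one_re]
  linarith [re_le_norm (u * conj v)]

lemma normSq_one_sub_conj_mul_sub_normSq_sub (a z : ℂ) :
    normSq (1 - conj a * z) - normSq (a - z) = (1 - normSq a) * (1 - normSq z) := by
  simp only [normSq_apply, mul_re, mul_im, conj_re, conj_im, sub_re, sub_im, one_re, one_im]
  ring

def diskInvolution (a z : ℂ) : ℂ := (a - z) / (1 - conj a * z)

lemma diskInvolution_mem {a z : ℂ} (ha : a ∈ Disk) (hz : z ∈ Disk) :
    diskInvolution a z ∈ Disk := by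
  have hden := one_sub_conj_mul_ne_zero ha hz
  have hlt : normSq (a - z) < normSq (1 - conj a * z) := by
    have := normSq_one_sub_conj_mul_sub_normSq_sub a z
    nlinarith [normSq_lt_one_of_mem_disk ha, normSq_lt_one_of_mem_disk hz]
  rw [mem_ball_zero_iff, diskInvolution, norm_div, div_lt_one (norm_pos_iff.2 hden)]
  rw [← Complex.sq_norm, ← Complex.sq_norm] at hlt
  exact lt_of_pow_lt_pow_left₀ 2 (norm_nonneg _) hlt

lemma mapsTo_diskInvolution {a : ℂ} (ha : a ∈ Disk) : MapsTo (diskInvolution a) Disk Disk :=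
  fun _ hz => diskInvolution_mem ha hz

lemma differentiableOn_diskInvolution {a : ℂ} (ha : a ∈ Disk) :
    DifferentiableOn ℂ (diskInvolution a) Disk :=
  DifferentiableOn.div (by fun_prop) (by fun_prop) fun _ hz => one_sub_conj_mul_ne_zero ha hz

lemma diskInvolution_diskInvolution {a z : ℂ} (ha : a ∈ Disk) (hz : z ∈ Disk) :
    diskInvolution a (diskInvolution a z) = z := by
  have hden := one_sub_conj_mul_ne_zero ha hz
  have hna : 1 - (normSq a : ℂ) ≠ 0 := by
    exact_mod_cast (sub_pos.2 (normSq_lt_one_of_mem_disk ha)).ne'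
  have hca : conj a * a = normSq a := by rw [mul_comm, mul_conj]
  have h₁ : a - diskInvolution a z = z * (1 - normSq a) / (1 - conj a * z) := by
    rw [diskInvolution, eq_div_iff hden, sub_mul, div_mul_cancel₀ _ hden]
    linear_combination (-z) * hca
  have h₂ : 1 - conj a * diskInvolution a z = (1 - normSq a) / (1 - conj a * z) := by
    rw [diskInvolution, eq_div_iff hden, sub_mul, mul_assoc, div_mul_cancel₀ _ hden]
    linear_combination -hca
  rw [diskInvolution, h₁, h₂, div_div_div_cancel_right₀ hden, mul_div_cancel_right₀ _ hna]

theorem schwarz_pick {f : ℂ → ℂ} (hf : DifferentiableOn ℂ f Disk) (hfm : MapsTo f Disk Disk)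
    {a b : ℂ} (ha : a ∈ Disk) (hb : b ∈ Disk) :
    ‖diskInvolution (f a) (f b)‖ ≤ ‖diskInvolution a b‖ := by
  set g := diskInvolution (f a) ∘ f ∘ diskInvolution a
  have hg : DifferentiableOn ℂ g Disk :=
    (differentiableOn_diskInvolution (hfm ha)).comp
      (hf.comp (differentiableOn_diskInvolution ha) (mapsTo_diskInvolution ha))
      (hfm.comp (mapsTo_diskInvolution ha))
  have hgm : MapsTo g Disk Disk :=
    (mapsTo_diskInvolution (hfm ha)).comp (hfm.comp (mapsTo_diskInvolution ha))
  have hg0 : g 0 = 0 := by simp [g, diskInvolution]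
  have hgb : g (diskInvolution a b) = diskInvolution (f a) (f b) := by
    simp [g, diskInvolution_diskInvolution ha hb]
  rw [← hgb]
  exact norm_le_norm_of_mapsTo_ball hg (hgm.mono_right ball_subset_closedBall) hg0
    (mem_ball_zero_iff.1 (diskInvolution_mem ha hb))

theorem schwarz_pick_normSq {f : ℂ → ℂ} (hf : DifferentiableOn ℂ f Disk)
    (hfm : MapsTo f Disk Disk) {a b : ℂ} (ha : a ∈ Disk) (hb : b ∈ Disk) :
    (1 - normSq a) * (1 - normSq b) * normSq (1 - conj (f a) * f b) ≤
      (1 - normSq (f a)) * (1 - normSq (f b)) * normSq (1 - conj a * b) := by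
  have hN := normSq_pos.2 (one_sub_conj_mul_ne_zero ha hb)
  have hNf := normSq_pos.2 (one_sub_conj_mul_ne_zero (hfm ha) (hfm hb))
  have h := pow_le_pow_left₀ (norm_nonneg _) (schwarz_pick hf hfm ha hb) 2
  rw [Complex.sq_norm, Complex.sq_norm, diskInvolution, diskInvolution, normSq_div, normSq_div,
    div_le_div_iff₀ hNf hN] at h
  linear_combination h - normSq (1 - conj (f a) * f b) * normSq_one_sub_conj_mul_sub_normSq_sub a b
    + normSq (1 - conj a * b) * normSq_one_sub_conj_mul_sub_normSq_sub (f a) (f b)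

end SchwarzPick

section RadialLimits

variable {ζ : ℂ}

lemma norm_ofReal_mul_of_norm_eq_one (hζ : ‖ζ‖ = 1) (r : ℝ) : ‖(r : ℂ) * ζ‖ = |r| := by
  simp [hζ]

lemma ofReal_mul_mem_disk (hζ : ‖ζ‖ = 1) {r : ℝ} (hr : r ∈ Ioo 0 1) : (r : ℂ) * ζ ∈ Disk := by
  rw [mem_ball_zero_iff, norm_ofReal_mul_of_norm_eq_one hζ, abs_of_pos hr.1]
  exact hr.2

theorem HasNontangentialLimit.tendsto_radial {α : Type*} [TopologicalSpace α] {f : ℂ → α}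
    {L : α} (h : HasNontangentialLimit f ζ L) (hζ : ‖ζ‖ = 1) :
    Tendsto (fun r : ℝ => f (r * ζ)) (𝓝[<] 1) (𝓝 L) := by
  refine (h 2 one_lt_two).comp (tendsto_nhdsWithin_iff.2 ⟨?_, ?_⟩)
  · have : Continuous fun r : ℝ => (r : ℂ) * ζ := by fun_prop
    simpa using (this.tendsto 1).mono_left nhdsWithin_le_nhds
  · filter_upwards [Ioo_mem_nhdsLT one_pos] with r hr
    have hnorm : ‖(r : ℂ) * ζ‖ = r := by
      rw [norm_ofReal_mul_of_norm_eq_one hζ, abs_of_pos hr.1]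
    have hsub : ‖(r : ℂ) * ζ - ζ‖ = 1 - r := by
      rw [show (r : ℂ) * ζ - ζ = ((r - 1 : ℝ) : ℂ) * ζ by push_cast; ring,
        norm_ofReal_mul_of_norm_eq_one hζ, abs_of_neg (by linarith [hr.2])]
      ring
    exact ⟨by rw [hnorm]; exact hr.2, by rw [hsub, hnorm]; linarith [hr.2]⟩

lemma tendsto_one_sub_nhdsLT_one : Tendsto (fun r : ℝ => 1 - r) (𝓝[<] 1) (𝓝 0) := by
  have h : Tendsto (fun r : ℝ => 1 - r) (𝓝 1) (𝓝 (1 - 1)) := tendsto_const_nhds.sub tendsto_id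
  simpa using h.mono_left nhdsWithin_le_nhds

lemma tendsto_one_add_nhdsLT_one : Tendsto (fun r : ℝ => 1 + r) (𝓝[<] 1) (𝓝 2) := by
  have h : Tendsto (fun r : ℝ => 1 + r) (𝓝 1) (𝓝 (1 + 1)) := tendsto_const_nhds.add tendsto_id
  simpa [one_add_one_eq_two] using h.mono_left nhdsWithin_le_nhds

lemma tendsto_one_sub_ofReal_nhdsLT_one : Tendsto (fun r : ℝ => (1 : ℂ) - r) (𝓝[<] 1) (𝓝 0) := by
  have h : Tendsto (fun r : ℝ => (1 : ℂ) - r) (𝓝 1) (𝓝 (1 - (1 : ℝ))) :=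
    tendsto_const_nhds.sub (continuous_ofReal.tendsto 1)
  simpa using h.mono_left nhdsWithin_le_nhds

end RadialLimits

def radialQuotient (f : ℂ → ℂ) (ζ ω : ℂ) (r : ℝ) : ℂ := (1 - conj ω * f (r * ζ)) / (1 - r)

lemma conj_mul_self_of_norm_eq_one {ω : ℂ} (hω : ‖ω‖ = 1) : conj ω * ω = 1 := by
  rw [conj_mul', hω]
  simp

theorem HasNontangentialLimit.tendsto_radialQuotient {f : ℂ → ℂ} {ζ ω A : ℂ}
    (hA : HasNontangentialLimit (fun z => (f z - ω) / (z - ζ)) ζ A) (hζ : ‖ζ‖ = 1)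
    (hω : ‖ω‖ = 1) :
    Tendsto (radialQuotient f ζ ω) (𝓝[<] 1) (𝓝 (conj ω * ζ * A)) := by
  refine ((hA.tendsto_radial hζ).const_mul (conj ω * ζ)).congr' ?_
  filter_upwards [Ioo_mem_nhdsLT one_pos] with r hr
  have hζ0 : ζ ≠ 0 := norm_ne_zero_iff.1 (by rw [hζ]; exact one_ne_zero)
  have hr1 : (1 : ℂ) - r ≠ 0 := sub_ne_zero.2 (by exact_mod_cast hr.2.ne')
  have hden : (r : ℂ) * ζ - ζ = -((1 - r) * ζ) := by ring
  rw [radialQuotient, hden]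
  field_simp
  linear_combination conj_mul_self_of_norm_eq_one hω

section Julia

variable {f : ℂ → ℂ} {ζ ω d : ℂ}

lemma tendsto_radial_of_tendsto_radialQuotient (hω : ‖ω‖ = 1)
    (hd : Tendsto (radialQuotient f ζ ω) (𝓝[<] 1) (𝓝 d)) :
    Tendsto (fun r : ℝ => f (r * ζ)) (𝓝[<] 1) (𝓝 ω) := by
  have h := ((hd.mul tendsto_one_sub_ofReal_nhdsLT_one).const_sub 1).const_mul ω
  rw [mul_zero, sub_zero, mul_one] at h
  refine h.congr' ?_
  filter_upwards [Ioo_mem_nhdsLT one_pos] with r hr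
  have hr1 : (1 : ℂ) - r ≠ 0 := sub_ne_zero.2 (by exact_mod_cast hr.2.ne')
  rw [radialQuotient, div_mul_cancel₀ _ hr1, sub_sub_cancel, ← mul_assoc, mul_comm ω,
    conj_mul_self_of_norm_eq_one hω, one_mul]

lemma normSq_ofReal_mul_of_norm_eq_one (hζ : ‖ζ‖ = 1) (r : ℝ) : normSq ((r : ℂ) * ζ) = r ^ 2 := by
  rw [← Complex.sq_norm, norm_ofReal_mul_of_norm_eq_one hζ, sq_abs]

lemma normSq_one_sub_ofReal (r : ℝ) : normSq (1 - (r : ℂ)) = (1 - r) ^ 2 := by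
  rw [← ofReal_one, ← ofReal_sub, normSq_ofReal, sq]

lemma normSq_radialQuotient (r : ℝ) :
    normSq (radialQuotient f ζ ω r) = normSq (1 - conj ω * f (r * ζ)) / (1 - r) ^ 2 := by
  rw [radialQuotient, normSq_div, normSq_one_sub_ofReal]

lemma one_sub_normSq_div_eq (w : ℂ) {u : ℝ} (hu : u ≠ 0) :
    (1 - normSq w) / u = 2 * ((1 - w) / u).re - normSq ((1 - w) / u) * u := by
  rw [div_ofReal_re, normSq_div, normSq_ofReal]
  field_simp
  simp only [normSq_apply, sub_re, sub_im, one_re, one_im]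
  ring

lemma tendsto_one_sub_normSq_div (hω : ‖ω‖ = 1)
    (hd : Tendsto (radialQuotient f ζ ω) (𝓝[<] 1) (𝓝 d)) :
    Tendsto (fun r : ℝ => (1 - normSq (f (r * ζ))) / (1 - r)) (𝓝[<] 1) (𝓝 (2 * d.re)) := by
  have h := (((continuous_re.tendsto d).comp hd).const_mul 2).sub
    (((continuous_normSq.tendsto d).comp hd).mul tendsto_one_sub_nhdsLT_one)
  rw [mul_zero, sub_zero] at h
  refine h.congr' ?_
  filter_upwards [Ioo_mem_nhdsLT one_pos] with r hr
  have hr1 : 1 - r ≠ 0 := sub_ne_zero.2 hr.2.ne'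
  have hw : normSq (f (r * ζ)) = normSq (conj ω * f (r * ζ)) := by
    rw [normSq_mul, normSq_conj, ← Complex.sq_norm ω, hω, one_pow, one_mul]
  rw [hw, one_sub_normSq_div_eq _ hr1]
  push_cast
  rfl

lemma conj_ofReal_mul_mul_ofReal_mul (hζ : ‖ζ‖ = 1) (s r : ℝ) :
    conj ((s : ℂ) * ζ) * ((r : ℂ) * ζ) = ((s * r : ℝ) : ℂ) := by
  rw [map_mul, conj_ofReal, mul_mul_mul_comm, conj_mul_self_of_norm_eq_one hζ, mul_one,
    ofReal_mul]

lemma schwarz_pick_radial (hf : DifferentiableOn ℂ f Disk) (hfm : MapsTo f Disk Disk)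
    (hζ : ‖ζ‖ = 1) {s r : ℝ} (hs : s ∈ Ioo 0 1) (hr : r ∈ Ioo 0 1) :
    (1 - s ^ 2) * (1 - r ^ 2) * normSq (1 - conj (f (s * ζ)) * f (r * ζ)) ≤
      (1 - normSq (f (s * ζ))) * (1 - normSq (f (r * ζ))) * (1 - s * r) ^ 2 := by
  have h := schwarz_pick_normSq hf hfm (ofReal_mul_mem_disk hζ hs) (ofReal_mul_mem_disk hζ hr)
  rwa [normSq_ofReal_mul_of_norm_eq_one hζ, normSq_ofReal_mul_of_norm_eq_one hζ,
    conj_ofReal_mul_mul_ofReal_mul hζ, ← ofReal_one, ← ofReal_sub, normSq_ofReal, ← sq] at h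

/-- Schwarz–Pick at `sζ` and `rζ`, in the limit `s → 1⁻`. -/
theorem julia_radial (hf : DifferentiableOn ℂ f Disk) (hfm : MapsTo f Disk Disk)
    (hζ : ‖ζ‖ = 1) (hω : ‖ω‖ = 1) (hd : Tendsto (radialQuotient f ζ ω) (𝓝[<] 1) (𝓝 d))
    {r : ℝ} (hr : r ∈ Ioo 0 1) :
    normSq (radialQuotient f ζ ω r) * (1 + r) ≤ d.re * ((1 - normSq (f (r * ζ))) / (1 - r)) := by
  set w := f (r * ζ)
  have hu : 0 < 1 - r := sub_pos.2 hr.2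
  have hlim : 2 * ((1 - r ^ 2) * normSq (1 - conj ω * w)) ≤
      2 * d.re * ((1 - normSq w) * (1 - r) ^ 2) := by
    have hconj : Tendsto (fun s : ℝ => normSq (1 - conj (f (s * ζ)) * w)) (𝓝[<] 1)
        (𝓝 (normSq (1 - conj ω * w))) :=
      ((Continuous.tendsto (f := fun z => normSq (1 - conj z * w)) (by fun_prop) ω).comp
        (tendsto_radial_of_tendsto_radialQuotient hω hd))
    have hsr : Tendsto (fun s : ℝ => (1 - normSq w) * (1 - s * r) ^ 2) (𝓝[<] 1)
        (𝓝 ((1 - normSq w) * (1 - r) ^ 2)) := by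
      have h : Continuous fun s : ℝ => (1 - normSq w) * (1 - s * r) ^ 2 := by fun_prop
      simpa using (h.tendsto 1).mono_left nhdsWithin_le_nhds
    refine le_of_tendsto_of_tendsto (tendsto_one_add_nhdsLT_one.mul (hconj.const_mul (1 - r ^ 2)))
      ((tendsto_one_sub_normSq_div hω hd).mul hsr) ?_
    filter_upwards [Ioo_mem_nhdsLT one_pos] with s hs
    have hus : 0 < 1 - s := sub_pos.2 hs.2
    have h := schwarz_pick_radial hf hfm hζ hs hr
    rw [div_mul_eq_mul_div, le_div_iff₀ hus]
    linear_combination h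
  have hw : normSq (1 - conj ω * w) = normSq (radialQuotient f ζ ω r) * (1 - r) ^ 2 := by
    rw [normSq_radialQuotient, div_mul_cancel₀ _ (pow_ne_zero 2 hu.ne')]
  rw [hw] at hlim
  rw [mul_div_assoc', le_div_iff₀ hu]
  nlinarith [pow_pos hu 3]

/-- Positivity comes from Julia's inequality at a single radius, reality from its limit
`2 |d|² ≤ 2 (Re d)²`. -/
theorem re_pos_and_im_eq_zero_of_tendsto_radialQuotient (hf : DifferentiableOn ℂ f Disk)
    (hfm : MapsTo f Disk Disk) (hζ : ‖ζ‖ = 1) (hω : ‖ω‖ = 1)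
    (hd : Tendsto (radialQuotient f ζ ω) (𝓝[<] 1) (𝓝 d)) :
    0 < d.re ∧ d.im = 0 := by
  have hhalf : (1 / 2 : ℝ) ∈ Ioo 0 1 := by norm_num
  have hfhalf : ‖f ((1 / 2 : ℝ) * ζ)‖ < 1 :=
    mem_ball_zero_iff.1 (hfm (ofReal_mul_mem_disk hζ hhalf))
  have hquot : 0 < normSq (radialQuotient f ζ ω (1 / 2)) := by
    refine normSq_pos.2 (div_ne_zero (sub_ne_zero.2 fun h => ?_) (by norm_num))
    have := congrArg norm h
    rw [norm_one, norm_mul, RCLike.norm_conj, hω, one_mul] at this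
    exact hfhalf.ne' this
  have hdefect : 0 < (1 - normSq (f ((1 / 2 : ℝ) * ζ))) / (1 - 1 / 2) := by
    rw [normSq_eq_norm_sq]
    have := pow_lt_one₀ (norm_nonneg _) hfhalf two_ne_zero
    apply div_pos <;> linarith
  have hre : 0 < d.re := by
    have := julia_radial hf hfm hζ hω hd hhalf
    nlinarith
  have hlim : normSq d * 2 ≤ d.re * (2 * d.re) := by
    refine le_of_tendsto_of_tendsto
      (((continuous_normSq.tendsto d).comp hd).mul tendsto_one_add_nhdsLT_one)
      ((tendsto_one_sub_normSq_div hω hd).const_mul d.re) ?_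
    filter_upwards [Ioo_mem_nhdsLT one_pos] with r hr using julia_radial hf hfm hζ hω hd hr
  rw [normSq_apply] at hlim
  exact ⟨hre, by nlinarith [sq_nonneg d.im]⟩

end Julia

theorem julia_caratheodory {f : ℂ → ℂ} (hf : DifferentiableOn ℂ f Disk) (hfm : MapsTo f Disk Disk)
    {ζ ω A : ℂ} (hζ : ‖ζ‖ = 1) (hω : ‖ω‖ = 1)
    (hA : HasNontangentialLimit (fun z => (f z - ω) / (z - ζ)) ζ A) :
    Tendsto (radialQuotient f ζ ω) (𝓝[<] 1) (𝓝 (‖A‖ : ℂ)) ∧ 0 < ‖A‖ := by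
  have hd := hA.tendsto_radialQuotient hζ hω
  obtain ⟨hre, him⟩ := re_pos_and_im_eq_zero_of_tendsto_radialQuotient hf hfm hζ hω hd
  have hreal : ((conj ω * ζ * A).re : ℂ) = conj ω * ζ * A := ext (by simp) (by simp [him])
  have hnorm : ‖A‖ = (conj ω * ζ * A).re := by
    rw [← Complex.norm_of_nonneg hre.le, hreal]
    simp [hω, hζ]
  rw [hnorm, hreal]
  exact ⟨hd, hre⟩

/-- `1 - φ conj ψ = (1 - conj ω φ) + conj ω φ · conj (1 - conj ω ψ)` splits the quotient into the
two radial quotients. -/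
theorem tendsto_one_sub_mul_conj_div {φ ψ : ℂ → ℂ} {ζ₁ ζ₂ ω a b : ℂ} (hω : ‖ω‖ = 1)
    (hφ : Tendsto (radialQuotient φ ζ₁ ω) (𝓝[<] 1) (𝓝 a))
    (hψ : Tendsto (radialQuotient ψ ζ₂ ω) (𝓝[<] 1) (𝓝 b)) :
    Tendsto (fun r : ℝ => (1 - φ (r * ζ₁) * conj (ψ (r * ζ₂))) / (1 - r)) (𝓝[<] 1)
      (𝓝 (a + conj b)) := by
  have hωω := conj_mul_self_of_norm_eq_one hω
  have hφω : Tendsto (fun r : ℝ => conj ω * φ (r * ζ₁)) (𝓝[<] 1) (𝓝 1) := by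
    simpa [hωω] using (tendsto_radial_of_tendsto_radialQuotient hω hφ).const_mul (conj ω)
  have h := hφ.add (hφω.mul ((continuous_conj.tendsto b).comp hψ))
  rw [one_mul] at h
  refine h.congr' ?_
  filter_upwards [Ioo_mem_nhdsLT one_pos] with r hr
  have hr1 : (1 : ℂ) - r ≠ 0 := sub_ne_zero.2 (by exact_mod_cast hr.2.ne')
  simp only [Function.comp_apply, radialQuotient, map_div₀, map_sub, map_mul, map_one,
    conj_conj, conj_ofReal]
  field_simp
  linear_combination (-φ (r * ζ₁) * conj (ψ (r * ζ₂))) * hωω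

lemma ofReal_div_cpow {a : ℝ} (ha : 0 < a) {X : ℂ} (hX : X ∈ slitPlane) (s : ℂ) :
    ((a : ℂ) / X) ^ s = (a : ℂ) ^ s / X ^ s := by
  have hX0 := slitPlane_ne_zero hX
  have ha0 : (a : ℂ) ≠ 0 := ofReal_ne_zero.2 ha.ne'
  rw [div_eq_mul_inv, cpow_def_of_ne_zero (mul_ne_zero ha0 (inv_ne_zero hX0)),
    log_ofReal_mul ha (inv_ne_zero hX0), log_inv _ (slitPlane_arg_ne_pi hX),
    cpow_def_of_ne_zero ha0, cpow_def_of_ne_zero hX0, ofReal_log ha.le, ← exp_sub]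
  ring_nf

namespace DiskKernelSpace

variable {t : ℝ} (S : DiskKernelSpace t)

lemma adjoint_kernel {φ : ℂ → ℂ} {C : S.H →L[ℂ] S.H} (hC : S.IsCompositionOperator φ C)
    (hφm : MapsTo φ Disk Disk) {w : ℂ} (hw : w ∈ Disk) :
    ContinuousLinearMap.adjoint C (S.kernel w) = S.kernel (φ w) :=
  ext_inner_right ℂ fun f => by
    rw [ContinuousLinearMap.adjoint_inner_left, S.reproducing _ _ hw, hC f w hw,
      S.reproducing _ _ (hφm hw)]

lemma inner_kernel_kernel {w z : ℂ} (hw : w ∈ Disk) (hz : z ∈ Disk) :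
    ⟪S.kernel w, S.kernel z⟫ = (1 - w * conj z) ^ (-(t : ℂ)) := by
  rw [S.reproducing _ _ hw, S.eval_kernel _ hz _ hw]

lemma norm_kernel_sq {w : ℂ} (hw : w ∈ Disk) : ‖S.kernel w‖ ^ 2 = (1 - ‖w‖ ^ 2) ^ (-t) := by
  have h := (inner_self_eq_norm_sq_to_K (𝕜 := ℂ) (S.kernel w)).symm.trans
    (S.inner_kernel_kernel hw hw)
  rw [mul_conj', ← ofReal_pow, ← ofReal_one, ← ofReal_sub, ← ofReal_neg,
    ← ofReal_cpow (one_sub_norm_sq_pos hw).le] at h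
  apply ofReal_injective
  rw [ofReal_pow]
  exact h

lemma inner_adjoint_normalized_kernel {φ ψ : ℂ → ℂ} {Cφ Cψ : S.H →L[ℂ] S.H}
    (hCφ : S.IsCompositionOperator φ Cφ) (hCψ : S.IsCompositionOperator ψ Cψ)
    (hφm : MapsTo φ Disk Disk) (hψm : MapsTo ψ Disk Disk) {w₁ w₂ : ℂ} (hw₁ : w₁ ∈ Disk)
    (hw₂ : w₂ ∈ Disk) (hnorm : ‖w₁‖ = ‖w₂‖) :
    ⟪ContinuousLinearMap.adjoint Cφ ((‖S.kernel w₁‖ : ℂ)⁻¹ • S.kernel w₁),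
      ContinuousLinearMap.adjoint Cψ ((‖S.kernel w₂‖ : ℂ)⁻¹ • S.kernel w₂)⟫ =
      ((1 - ‖w₁‖ ^ 2 : ℝ) : ℂ) ^ (t : ℂ) / (1 - φ w₁ * conj (ψ w₂)) ^ (t : ℂ) := by
  have hK : ‖S.kernel w₂‖ = ‖S.kernel w₁‖ := by
    rw [← sq_eq_sq₀ (norm_nonneg _) (norm_nonneg _), S.norm_kernel_sq hw₁,
      S.norm_kernel_sq hw₂, hnorm]
  rw [map_smul, map_smul, inner_smul_left, inner_smul_right, S.adjoint_kernel hCφ hφm hw₁,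
    S.adjoint_kernel hCψ hψm hw₂, S.inner_kernel_kernel (hφm hw₁) (hψm hw₂), hK, map_inv₀,
    conj_ofReal, ← mul_assoc, ← mul_inv, ← sq, ← ofReal_pow, S.norm_kernel_sq hw₁,
    ofReal_cpow (one_sub_norm_sq_pos hw₁).le, ofReal_neg, cpow_neg, inv_inv, cpow_neg,
    div_eq_mul_inv]

end DiskKernelSpace

lemma tendsto_one_sub_sq_div_of_tendsto_div_one_sub {g : ℝ → ℂ} {c : ℂ} (hc : c ≠ 0)
    (hg : Tendsto (fun r : ℝ => g r / (1 - r)) (𝓝[<] 1) (𝓝 c)) :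
    Tendsto (fun r : ℝ => (1 - (r : ℂ) ^ 2) / g r) (𝓝[<] 1) (𝓝 (2 / c)) := by
  have h := ((continuous_ofReal.tendsto 2).comp tendsto_one_add_nhdsLT_one).div hg hc
  rw [ofReal_ofNat] at h
  refine h.congr fun r => ?_
  change ((1 + r : ℝ) : ℂ) / (g r / (1 - r)) = _
  rw [div_div_eq_mul_div]
  push_cast
  ring

theorem adjoint_kernel_inner_limit_disk_general
    (t : ℝ)
    (S : DiskKernelSpace t)
    (φ ψ : ℂ → ℂ)
    (hφ : DifferentiableOn ℂ φ Disk) (hφm : Set.MapsTo φ Disk Disk)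
    (hψ : DifferentiableOn ℂ ψ Disk) (hψm : Set.MapsTo ψ Disk Disk)
    (ζ₁ ζ₂ ω : ℂ) (hζ₁ : ‖ζ₁‖ = 1) (hζ₂ : ‖ζ₂‖ = 1) (hω : ‖ω‖ = 1)
    (Aφ Aψ : ℂ)
    (hAφ : HasNontangentialLimit (fun z => (φ z - ω) / (z - ζ₁)) ζ₁ Aφ)
    (hAψ : HasNontangentialLimit (fun z => (ψ z - ω) / (z - ζ₂)) ζ₂ Aψ)
    (Cφ Cψ : S.H →L[ℂ] S.H)
    (hCφ : S.IsCompositionOperator φ Cφ) (hCψ : S.IsCompositionOperator ψ Cψ) :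
    0 < (2 / (‖Aφ‖ + ‖Aψ‖)) ^ t ∧
    Tendsto
      (fun r : ℝ =>
        ⟪ContinuousLinearMap.adjoint Cφ
            ((‖S.kernel ((r : ℂ) * ζ₁)‖ : ℂ)⁻¹ • S.kernel ((r : ℂ) * ζ₁)),
          ContinuousLinearMap.adjoint Cψ
            ((‖S.kernel ((r : ℂ) * ζ₂)‖ : ℂ)⁻¹ • S.kernel ((r : ℂ) * ζ₂))⟫)
      (𝓝[<] (1 : ℝ)) (𝓝 (((2 / (‖Aφ‖ + ‖Aψ‖)) ^ t : ℝ) : ℂ)) ∧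
    Tendsto
      (fun r : ℝ =>
        ((1 - (r : ℂ) ^ 2) /
            (1 - φ ((r : ℂ) * ζ₁) * (starRingEnd ℂ) (ψ ((r : ℂ) * ζ₂)))) ^ (t : ℂ))
      (𝓝[<] (1 : ℝ)) (𝓝 (((2 / (‖Aφ‖ + ‖Aψ‖)) ^ t : ℝ) : ℂ)) := by
  obtain ⟨hDφ, hAφ_pos⟩ := julia_caratheodory hφ hφm hζ₁ hω hAφ
  obtain ⟨hDψ, -⟩ := julia_caratheodory hψ hψm hζ₂ hω hAψ
  have hL : 0 < ‖Aφ‖ + ‖Aψ‖ := add_pos_of_pos_of_nonneg hAφ_pos (norm_nonneg _)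
  have hpos : 0 < 2 / (‖Aφ‖ + ‖Aψ‖) := div_pos two_pos hL
  have hquot := tendsto_one_sub_mul_conj_div hω hDφ hDψ
  rw [conj_ofReal, ← ofReal_add] at hquot
  have hbase := tendsto_one_sub_sq_div_of_tendsto_div_one_sub
    (ofReal_ne_zero.2 hL.ne') hquot
  rw [← ofReal_ofNat, ← ofReal_div] at hbase
  have hpow := hbase.cpow (tendsto_const_nhds (x := (t : ℂ))) (ofReal_mem_slitPlane.2 hpos)
  rw [← ofReal_cpow hpos.le] at hpow
  refine ⟨Real.rpow_pos_of_pos hpos t, hpow.congr' ?_, hpow⟩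
  filter_upwards [Ioo_mem_nhdsLT one_pos] with r hr
  have hw₁ := ofReal_mul_mem_disk hζ₁ hr
  have hw₂ := ofReal_mul_mem_disk hζ₂ hr
  rw [S.inner_adjoint_normalized_kernel hCφ hCψ hφm hψm hw₁ hw₂
      (by rw [norm_ofReal_mul_of_norm_eq_one hζ₁, norm_ofReal_mul_of_norm_eq_one hζ₂]),
    norm_ofReal_mul_of_norm_eq_one hζ₁, sq_abs, ← ofReal_div_cpow (by nlinarith [hr.1, hr.2])
      (one_sub_mul_conj_mem_slitPlane (hφm hw₁) (hψm hw₂))]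
  push_cast
  rfl

/-- Let `φ, ψ` be holomorphic self-maps of the unit disk `D` and
`ζ₁, ζ₂, ω ∈ ∂D` be such that `φ` has nontangential limit `ω` at `ζ₁`, `ψ` has nontangential
limit `ω` at `ζ₂`, and the angular derivatives `φ'(ζ₁) = Aφ`, `ψ'(ζ₂) = Aψ` exist.  Then on
the Hardy space `H²(D)` (`t = 1`) and on the weighted Bergman spaces `A²_s(D)` (`t = s + 2`,
`s > -1`) one has `lim_{r→1⁻} ⟨C_ψ* k_{rζ₂}, C_φ* k_{rζ₁}⟩ = (2/(|φ'(ζ₁)| + |ψ'(ζ₂)|))^t > 0`;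
equivalently `lim_{r→1⁻} ((1-r²)/(1-φ(rζ₁)·conj(ψ(rζ₂))))^t = (2/(|φ'(ζ₁)|+|ψ'(ζ₂)|))^t`. -/
theorem adjoint_kernel_inner_limit_disk
    (t : ℝ) (ht : t = 1 ∨ ∃ s : ℝ, -1 < s ∧ t = s + 2)
    (S : DiskKernelSpace t)
    (φ ψ : ℂ → ℂ)
    (hφ : DifferentiableOn ℂ φ Disk) (hφm : Set.MapsTo φ Disk Disk)
    (hψ : DifferentiableOn ℂ ψ Disk) (hψm : Set.MapsTo ψ Disk Disk)
    (ζ₁ ζ₂ ω : ℂ) (hζ₁ : ‖ζ₁‖ = 1) (hζ₂ : ‖ζ₂‖ = 1) (hω : ‖ω‖ = 1)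
    (hRφ : HasNontangentialLimit φ ζ₁ ω) (hRψ : HasNontangentialLimit ψ ζ₂ ω)
    (Aφ Aψ : ℂ)
    (hAφ : HasNontangentialLimit (fun z => (φ z - ω) / (z - ζ₁)) ζ₁ Aφ)
    (hAψ : HasNontangentialLimit (fun z => (ψ z - ω) / (z - ζ₂)) ζ₂ Aψ)
    (Cφ Cψ : S.H →L[ℂ] S.H)
    (hCφ : S.IsCompositionOperator φ Cφ) (hCψ : S.IsCompositionOperator ψ Cψ) :
    0 < (2 / (‖Aφ‖ + ‖Aψ‖)) ^ t ∧
    Tendsto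
      (fun r : ℝ =>
        ⟪ContinuousLinearMap.adjoint Cφ
            ((‖S.kernel ((r : ℂ) * ζ₁)‖ : ℂ)⁻¹ • S.kernel ((r : ℂ) * ζ₁)),
          ContinuousLinearMap.adjoint Cψ
            ((‖S.kernel ((r : ℂ) * ζ₂)‖ : ℂ)⁻¹ • S.kernel ((r : ℂ) * ζ₂))⟫)
      (𝓝[<] (1 : ℝ)) (𝓝 (((2 / (‖Aφ‖ + ‖Aψ‖)) ^ t : ℝ) : ℂ)) ∧
    Tendsto
      (fun r : ℝ =>
        ((1 - (r : ℂ) ^ 2) /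
            (1 - φ ((r : ℂ) * ζ₁) * (starRingEnd ℂ) (ψ ((r : ℂ) * ζ₂)))) ^ (t : ℂ))
      (𝓝[<] (1 : ℝ)) (𝓝 (((2 / (‖Aφ‖ + ‖Aψ‖)) ^ t : ℝ) : ℂ)) :=
  adjoint_kernel_inner_limit_disk_general t S φ ψ hφ hφm hψ hψm ζ₁ ζ₂ ω hζ₁ hζ₂ hω Aφ Aψ hAφ hAψ Cφ
    Cψ hCφ hCψ
end
end

section
/- Let φ and ψ be linear fractional self-maps of the unit ball B_N and let σ be the Krein adjoint of ψ. Then [C_ψ*, C_φ] is compact on the Dirichlet space D(B_N) if and only if C_{σ∘φ} − C_{φ∘σ} is compact on D(B_N). Moreover, C_ψ* C_φ is compact on D(B_N) if and only if C_{φ∘σ} is compact, and C_φ C_ψ* is compact if and only if C_{σ∘φ} is compact. -/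
/-!
For the Krein adjoint `σ` of `ψ` the cross-ratio identity
`(1 - ⟪w, ψ z⟫) (1 - ⟪σ 0, z⟫) = (1 - ⟪σ w, z⟫) (1 - ⟪w, ψ 0⟫)` holds, and all four factors lie in
the right half-plane, where `log` is additive. Hence `C_ψ K_w = K_{σ w} - K_{σ 0} + K_w(ψ 0) K_0`
for the kernels `K_w = 1 + log (1 - ⟪·, w⟫)⁻¹`, and taking adjoints,
`C_ψ* f = f(0) K_{ψ 0} + f ∘ σ - f(σ 0)`. So `C_ψ* C_φ - C_{φ∘σ}` and `C_φ C_ψ* - C_{σ∘φ}` are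
differences of two rank-one operators, and compactness passes across them.
-/

open Filter MeasureTheory Metric Set
open scoped ComplexInnerProductSpace Topology

noncomputable section

/-- Borel measurable structure on `ℂ^N`. -/
instance (N : ℕ) : MeasurableSpace (EuclideanSpace ℂ (Fin N)) := borel _

instance (N : ℕ) : BorelSpace (EuclideanSpace ℂ (Fin N)) := ⟨rfl⟩

/-- The open unit ball `B_N` of `ℂ^N`. -/
abbrev Ball (N : ℕ) : Set (EuclideanSpace ℂ (Fin N)) := Metric.ball 0 1

/-- An abstract presentation of the Dirichlet space `𝒟(B_N)`: the reproducing-kernel Hilbert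
space of holomorphic functions on `B_N` with kernel `K_w(z) = 1 + log (1/(1 - ⟨z,w⟩))`.
Injectivity of evaluation forces the kernels to be total, so such a structure determines the
space uniquely up to canonical unitary equivalence. -/
structure DirichletSpace (N : ℕ) where
  (H : Type)
  [grp : NormedAddCommGroup H]
  [ips : InnerProductSpace ℂ H]
  [cpl : CompleteSpace H]
  eval : H → EuclideanSpace ℂ (Fin N) → ℂ
  eval_add : ∀ f g : H, ∀ z, eval (f + g) z = eval f z + eval g z
  eval_smul : ∀ (c : ℂ) (f : H) (z : EuclideanSpace ℂ (Fin N)), eval (c • f) z = c * eval f z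
  holo : ∀ f : H, DifferentiableOn ℂ (eval f) (Ball N)
  eval_injective : ∀ f g : H, (∀ z ∈ Ball N, eval f z = eval g z) → f = g
  kernel : EuclideanSpace ℂ (Fin N) → H
  eval_kernel : ∀ w ∈ Ball N, ∀ z ∈ Ball N,
    eval (kernel w) z = 1 + Complex.log (1 - ⟪w, z⟫)⁻¹
  reproducing : ∀ (f : H), ∀ w ∈ Ball N, ⟪kernel w, f⟫ = eval f w

attribute [instance] DirichletSpace.grp DirichletSpace.ips DirichletSpace.cpl

/-- `T` is the composition operator `C_φ : f ↦ f ∘ φ` on `S`. -/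
def DirichletSpace.IsCompositionOperator {N : ℕ} (S : DirichletSpace N)
    (φ : EuclideanSpace ℂ (Fin N) → EuclideanSpace ℂ (Fin N)) (T : S.H →L[ℂ] S.H) : Prop :=
  ∀ f : S.H, ∀ z ∈ Ball N, S.eval (T f) z = S.eval f (φ z)

/-- The data of a linear fractional map `φ(z) = (Az + B)/(⟨z,C⟩ + d)` of `ℂ^N`. -/
structure BallLFT (N : ℕ) where
  A : Matrix (Fin N) (Fin N) ℂ
  B : EuclideanSpace ℂ (Fin N)
  C : EuclideanSpace ℂ (Fin N)
  d : ℂ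

/-- The map `z ↦ (Az + B)/(⟨z,C⟩ + d)` associated to a linear fractional map. -/
def BallLFT.toFun {N : ℕ} (L : BallLFT N) (z : EuclideanSpace ℂ (Fin N)) :
    EuclideanSpace ℂ (Fin N) :=
  (⟪L.C, z⟫ + L.d)⁻¹ •
    ((WithLp.equiv 2 (Fin N → ℂ)).symm (L.A.mulVec (WithLp.equiv 2 (Fin N → ℂ) z)) + L.B)

/-- The Krein adjoint `σ(z) = (A*z - C)/(⟨z,-B⟩ + conj d)` of a linear fractional map. -/
def BallLFT.krein {N : ℕ} (L : BallLFT N) : BallLFT N :=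
  ⟨L.A.conjTranspose, -L.C, -L.B, (starRingEnd ℂ) L.d⟩

/-- `L` is a linear fractional self-map of the unit ball `B_N`. -/
def BallLFT.IsSelfMap {N : ℕ} (L : BallLFT N) : Prop :=
  (∀ z ∈ Ball N, ⟪L.C, z⟫ + L.d ≠ 0) ∧ Set.MapsTo L.toFun (Ball N) (Ball N)

/-- `‖φ‖_∞ = sup_{z ∈ B_N} |φ(z)|`. -/
def supNorm {N : ℕ} (φ : EuclideanSpace ℂ (Fin N) → EuclideanSpace ℂ (Fin N)) : ℝ :=
  sSup ((fun z => ‖φ z‖) '' Ball N)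

open scoped ComplexConjugate

namespace Complex

theorem log_mul_of_re_pos {x y : ℂ} (hx : 0 < x.re) (hy : 0 < y.re) :
    log (x * y) = log x + log y := by
  have harg {z : ℂ} (hz : 0 < z.re) : |z.arg| < Real.pi / 2 :=
    abs_arg_lt_pi_div_two_iff.mpr (Or.inl hz)
  have hx' := abs_lt.mp (harg hx)
  have hy' := abs_lt.mp (harg hy)
  refine log_mul (ne_of_apply_ne re hx.ne') (ne_of_apply_ne re hy.ne') ⟨?_, ?_⟩ <;> linarith

theorem inv_re_pos {z : ℂ} (hz : 0 < z.re) : 0 < z⁻¹.re := by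
  rw [inv_re]
  exact div_pos hz (normSq_pos.mpr (ne_of_apply_ne re hz.ne'))

theorem log_inv_add_log_inv_of_mul_eq {a b c e : ℂ} (ha : 0 < a.re) (hb : 0 < b.re)
    (hc : 0 < c.re) (he : 0 < e.re) (h : a * b = c * e) :
    log a⁻¹ + log b⁻¹ = log c⁻¹ + log e⁻¹ := by
  rw [← log_mul_of_re_pos (inv_re_pos ha) (inv_re_pos hb),
    ← log_mul_of_re_pos (inv_re_pos hc) (inv_re_pos he), ← mul_inv, ← mul_inv, h]

end Complex

theorem re_one_sub_inner_pos {E : Type*} [NormedAddCommGroup E] [InnerProductSpace ℂ E]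
    {a b : E} (ha : a ∈ ball (0 : E) 1) (hb : b ∈ ball (0 : E) 1) : 0 < (1 - ⟪a, b⟫).re := by
  rw [mem_ball_zero_iff] at ha hb
  have hab : ‖a‖ * ‖b‖ < 1 := by nlinarith [norm_nonneg a, norm_nonneg b]
  rw [Complex.sub_re, Complex.one_re]
  linarith [Complex.re_le_norm ⟪a, b⟫, norm_inner_le_norm (𝕜 := ℂ) a b]

theorem isCompactOperator_rankOne {𝕜 E F : Type*} [RCLike 𝕜] [NormedAddCommGroup E]
    [InnerProductSpace 𝕜 E] [NormedAddCommGroup F] [InnerProductSpace 𝕜 F] (x : E) (y : F) :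
    IsCompactOperator (InnerProductSpace.rankOne 𝕜 x y) :=
  (isCompactOperator_of_locallyCompactSpace_dom (innerSL 𝕜 y)).clm_comp
    (ContinuousLinearMap.toSpanSingleton 𝕜 x)

theorem isCompactOperator_iff_of_isCompactOperator_sub {𝕜 E : Type*} [NormedField 𝕜]
    [NormedAddCommGroup E] [NormedSpace 𝕜 E] {T D : E →L[𝕜] E}
    (h : IsCompactOperator (T - D)) : IsCompactOperator T ↔ IsCompactOperator D :=
  ⟨fun hT => by simpa using hT.sub h, fun hD => by simpa using hD.add h⟩

theorem isCompactOperator_sub_comm {𝕜 E : Type*} [NormedField 𝕜]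
    [NormedAddCommGroup E] [NormedSpace 𝕜 E] {T D : E →L[𝕜] E} :
    IsCompactOperator (T - D) ↔ IsCompactOperator (D - T) :=
  ⟨fun h => by simpa using h.neg, fun h => by simpa using h.neg⟩

theorem zero_mem_Ball {N : ℕ} : (0 : EuclideanSpace ℂ (Fin N)) ∈ Ball N :=
  mem_ball_self one_pos

namespace BallLFT

variable {N : ℕ}

theorem toFun_eq (L : BallLFT N) (z : EuclideanSpace ℂ (Fin N)) :
    L.toFun z = (⟪L.C, z⟫ + L.d)⁻¹ • (Matrix.toEuclideanLin L.A z + L.B) :=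
  rfl

theorem inner_toFun_right (L : BallLFT N) (w z : EuclideanSpace ℂ (Fin N)) :
    ⟪w, L.toFun z⟫ = (⟪L.C, z⟫ + L.d)⁻¹ * (⟪w, Matrix.toEuclideanLin L.A z⟫ + ⟪w, L.B⟫) := by
  rw [toFun_eq, inner_smul_right, inner_add_right]

theorem conj_krein_denom (L : BallLFT N) (w : EuclideanSpace ℂ (Fin N)) :
    conj (⟪L.krein.C, w⟫ + L.krein.d) = L.d - ⟪w, L.B⟫ := by
  simp only [krein, inner_neg_left, map_add, map_neg, inner_conj_symm, Complex.conj_conj]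
  ring

theorem inner_krein_toFun_left (L : BallLFT N) (w z : EuclideanSpace ℂ (Fin N)) :
    ⟪L.krein.toFun w, z⟫ =
      (L.d - ⟪w, L.B⟫)⁻¹ * (⟪w, Matrix.toEuclideanLin L.A z⟫ - ⟪L.C, z⟫) := by
  rw [toFun_eq, inner_smul_left, map_inv₀, conj_krein_denom, inner_add_left]
  simp only [krein, inner_neg_left, Matrix.toEuclideanLin_conjTranspose_eq_adjoint,
    LinearMap.adjoint_inner_left, sub_eq_add_neg]

theorem d_ne_zero {L : BallLFT N} (hL : L.IsSelfMap) : L.d ≠ 0 := by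
  simpa using hL.1 0 zero_mem_Ball

theorem d_sub_inner_B_ne_zero {L : BallLFT N} (hσ : L.krein.IsSelfMap)
    {w : EuclideanSpace ℂ (Fin N)} (hw : w ∈ Ball N) : L.d - ⟪w, L.B⟫ ≠ 0 := by
  rw [← conj_krein_denom]
  exact (map_ne_zero _).mpr (hσ.1 w hw)

theorem one_sub_inner_toFun_mul_eq {L : BallLFT N} {w z : EuclideanSpace ℂ (Fin N)}
    (hL : L.IsSelfMap) (hσ : L.krein.IsSelfMap) (hw : w ∈ Ball N) (hz : z ∈ Ball N) :
    (1 - ⟪w, L.toFun z⟫) * (1 - ⟪L.krein.toFun 0, z⟫) =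
      (1 - ⟪L.krein.toFun w, z⟫) * (1 - ⟪w, L.toFun 0⟫) := by
  have hP := hL.1 z hz
  have hQ := d_sub_inner_B_ne_zero hσ hw
  have hd := d_ne_zero hL
  rw [inner_toFun_right, inner_toFun_right, inner_krein_toFun_left, inner_krein_toFun_left]
  simp only [inner_zero_left, inner_zero_right, map_zero, zero_add, sub_zero]
  field_simp
  ring

theorem log_inv_one_sub_inner_toFun_add_eq {L : BallLFT N} {w z : EuclideanSpace ℂ (Fin N)}
    (hL : L.IsSelfMap) (hσ : L.krein.IsSelfMap) (hw : w ∈ Ball N) (hz : z ∈ Ball N) :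
    Complex.log (1 - ⟪w, L.toFun z⟫)⁻¹ + Complex.log (1 - ⟪L.krein.toFun 0, z⟫)⁻¹ =
      Complex.log (1 - ⟪L.krein.toFun w, z⟫)⁻¹ + Complex.log (1 - ⟪w, L.toFun 0⟫)⁻¹ :=
  Complex.log_inv_add_log_inv_of_mul_eq (re_one_sub_inner_pos hw (hL.2 hz))
    (re_one_sub_inner_pos (hσ.2 zero_mem_Ball) hz) (re_one_sub_inner_pos (hσ.2 hw) hz)
    (re_one_sub_inner_pos hw (hL.2 zero_mem_Ball)) (one_sub_inner_toFun_mul_eq hL hσ hw hz)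

end BallLFT

namespace DirichletSpace

open InnerProductSpace ContinuousLinearMap

variable {N : ℕ} (S : DirichletSpace N)

theorem eval_sub (f g : S.H) (z : EuclideanSpace ℂ (Fin N)) :
    S.eval (f - g) z = S.eval f z - S.eval g z := by
  rw [eq_sub_iff_add_eq, ← S.eval_add, sub_add_cancel]

theorem eval_kernel_zero {z : EuclideanSpace ℂ (Fin N)} (hz : z ∈ Ball N) :
    S.eval (S.kernel 0) z = 1 := by
  rw [S.eval_kernel 0 zero_mem_Ball z hz, inner_zero_left, sub_zero, inv_one,
    Complex.log_one, add_zero]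

theorem conj_eval_kernel {w z : EuclideanSpace ℂ (Fin N)} (hw : w ∈ Ball N) (hz : z ∈ Ball N) :
    conj (S.eval (S.kernel w) z) = S.eval (S.kernel z) w := by
  rw [← S.reproducing _ z hz, ← S.reproducing _ w hw, inner_conj_symm]

theorem eval_rankOne (x y f : S.H) (z : EuclideanSpace ℂ (Fin N)) :
    S.eval (rankOne ℂ x y f) z = ⟪y, f⟫ * S.eval x z := by
  rw [rankOne_apply, S.eval_smul]

namespace IsCompositionOperator

variable {S} {ψ φ : BallLFT N} {Cψ Cφ : S.H →L[ℂ] S.H}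

theorem apply_kernel (hψ : ψ.IsSelfMap) (hσ : ψ.krein.IsSelfMap)
    (hCψ : S.IsCompositionOperator ψ.toFun Cψ) {w : EuclideanSpace ℂ (Fin N)} (hw : w ∈ Ball N) :
    Cψ (S.kernel w) = S.kernel (ψ.krein.toFun w) - S.kernel (ψ.krein.toFun 0) +
      S.eval (S.kernel w) (ψ.toFun 0) • S.kernel 0 := by
  refine S.eval_injective _ _ fun z hz => ?_
  rw [hCψ _ z hz, S.eval_add, S.eval_sub, S.eval_smul, S.eval_kernel_zero hz, mul_one,
    S.eval_kernel w hw _ (hψ.2 hz), S.eval_kernel _ (hσ.2 hw) _ hz,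
    S.eval_kernel _ (hσ.2 zero_mem_Ball) _ hz,
    S.eval_kernel w hw _ (hψ.2 zero_mem_Ball)]
  linear_combination BallLFT.log_inv_one_sub_inner_toFun_add_eq hψ hσ hw hz

theorem eval_adjoint_apply (hψ : ψ.IsSelfMap) (hσ : ψ.krein.IsSelfMap)
    (hCψ : S.IsCompositionOperator ψ.toFun Cψ) (f : S.H) {w : EuclideanSpace ℂ (Fin N)}
    (hw : w ∈ Ball N) :
    S.eval (adjoint Cψ f) w = S.eval f 0 * S.eval (S.kernel (ψ.toFun 0)) w +
      S.eval f (ψ.krein.toFun w) - S.eval f (ψ.krein.toFun 0) := by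
  have h0 := zero_mem_Ball (N := N)
  rw [← S.reproducing _ w hw, adjoint_inner_right, hCψ.apply_kernel hψ hσ hw, inner_add_left,
    inner_sub_left, inner_smul_left, S.conj_eval_kernel hw (hψ.2 h0),
    S.reproducing f _ (hσ.2 hw), S.reproducing f _ (hσ.2 h0), S.reproducing f 0 h0]
  ring

theorem adjoint_comp_sub_eq (hψ : ψ.IsSelfMap) (hσ : ψ.krein.IsSelfMap) (hφ : φ.IsSelfMap)
    (hCψ : S.IsCompositionOperator ψ.toFun Cψ) (hCφ : S.IsCompositionOperator φ.toFun Cφ)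
    {Cφσ : S.H →L[ℂ] S.H}
    (hCφσ : S.IsCompositionOperator (fun z => φ.toFun (ψ.krein.toFun z)) Cφσ) :
    adjoint Cψ ∘L Cφ - Cφσ = rankOne ℂ (S.kernel (ψ.toFun 0)) (S.kernel (φ.toFun 0)) -
      rankOne ℂ (S.kernel 0) (S.kernel (φ.toFun (ψ.krein.toFun 0))) := by
  have h0 := zero_mem_Ball (N := N)
  ext f
  refine S.eval_injective _ _ fun w hw => ?_
  rw [sub_apply, comp_apply, S.eval_sub, hCψ.eval_adjoint_apply hψ hσ _ hw, hCφ f 0 h0,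
    hCφ f _ (hσ.2 hw), hCφ f _ (hσ.2 h0), hCφσ f w hw, sub_apply, S.eval_sub, S.eval_rankOne,
    S.eval_rankOne, S.reproducing f _ (hφ.2 h0), S.reproducing f _ (hφ.2 (hσ.2 h0)),
    S.eval_kernel_zero hw]
  ring

theorem comp_adjoint_sub_eq (hψ : ψ.IsSelfMap) (hσ : ψ.krein.IsSelfMap) (hφ : φ.IsSelfMap)
    (hCψ : S.IsCompositionOperator ψ.toFun Cψ) (hCφ : S.IsCompositionOperator φ.toFun Cφ)
    {Cσφ : S.H →L[ℂ] S.H}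
    (hCσφ : S.IsCompositionOperator (fun z => ψ.krein.toFun (φ.toFun z)) Cσφ) :
    Cφ ∘L adjoint Cψ - Cσφ = rankOne ℂ (Cφ (S.kernel (ψ.toFun 0))) (S.kernel 0) -
      rankOne ℂ (S.kernel 0) (S.kernel (ψ.krein.toFun 0)) := by
  have h0 := zero_mem_Ball (N := N)
  ext f
  refine S.eval_injective _ _ fun w hw => ?_
  rw [sub_apply, comp_apply, S.eval_sub, hCφ _ w hw, hCψ.eval_adjoint_apply hψ hσ _ (hφ.2 hw),
    hCσφ f w hw, sub_apply, S.eval_sub, S.eval_rankOne, S.eval_rankOne, hCφ _ w hw,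
    S.reproducing f 0 h0, S.reproducing f _ (hσ.2 h0), S.eval_kernel_zero hw]
  ring

end IsCompositionOperator

end DirichletSpace

/-- Let `φ, ψ` be linear fractional self-maps of `B_N` and `σ` the Krein
adjoint of `ψ`.  Then `[C_ψ*, C_φ]` is compact on the Dirichlet space `𝒟(B_N)` if and only
if `C_{σ∘φ} - C_{φ∘σ}` is compact.  Moreover `C_ψ* C_φ` is compact iff `C_{φ∘σ}` is compact,
and `C_φ C_ψ*` is compact iff `C_{σ∘φ}` is compact. -/
theorem dirichlet_commutator_compact_iff_difference_compact
    (N : ℕ) (S : DirichletSpace N)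
    (φ ψ : BallLFT N) (hφ : φ.IsSelfMap) (hψ : ψ.IsSelfMap) (hσ : ψ.krein.IsSelfMap)
    (Cφ Cψ Cσφ Cφσ : S.H →L[ℂ] S.H)
    (hCφ : S.IsCompositionOperator φ.toFun Cφ) (hCψ : S.IsCompositionOperator ψ.toFun Cψ)
    (hCσφ : S.IsCompositionOperator (fun z => ψ.krein.toFun (φ.toFun z)) Cσφ)
    (hCφσ : S.IsCompositionOperator (fun z => φ.toFun (ψ.krein.toFun z)) Cφσ) :
    (IsCompactOperator
        ⇑((ContinuousLinearMap.adjoint Cψ).comp Cφ -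
          Cφ.comp (ContinuousLinearMap.adjoint Cψ)) ↔
      IsCompactOperator ⇑(Cσφ - Cφσ)) ∧
    (IsCompactOperator ⇑((ContinuousLinearMap.adjoint Cψ).comp Cφ) ↔
      IsCompactOperator ⇑Cφσ) ∧
    (IsCompactOperator ⇑(Cφ.comp (ContinuousLinearMap.adjoint Cψ)) ↔
      IsCompactOperator ⇑Cσφ) := by
  have hA : IsCompactOperator ((ContinuousLinearMap.adjoint Cψ).comp Cφ - Cφσ) := by
    rw [hCψ.adjoint_comp_sub_eq hψ hσ hφ hCφ hCφσ, FunLike.coe_sub]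
    exact (isCompactOperator_rankOne _ _).sub (isCompactOperator_rankOne _ _)
  have hB : IsCompactOperator (Cφ.comp (ContinuousLinearMap.adjoint Cψ) - Cσφ) := by
    rw [hCψ.comp_adjoint_sub_eq hψ hσ hφ hCφ hCσφ, FunLike.coe_sub]
    exact (isCompactOperator_rankOne _ _).sub (isCompactOperator_rankOne _ _)
  refine ⟨(isCompactOperator_iff_of_isCompactOperator_sub ?_).trans isCompactOperator_sub_comm,
    isCompactOperator_iff_of_isCompactOperator_sub hA,
    isCompactOperator_iff_of_isCompactOperator_sub hB⟩
  rw [sub_sub_sub_comm, FunLike.coe_sub]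
  exact hA.sub hB
end
end

section
/- Let φ(z_1,z_2) = (z_1, z_2/2) and ψ(z_1,z_2) = (z_1, z_2/3), which are linear fractional self-maps of the unit ball B_2. Then on the Dirichlet space D(B_2), the commutator [C_ψ*, C_φ] is the zero operator: [C_ψ*, C_φ] f = 0 for every f ∈ D(B_2). In particular, the maps satisfy φ∘σ = σ∘φ and ‖φ‖_∞ = ‖ψ‖_∞ = 1 (where σ = ψ is the Krein adjoint of ψ), yet [C_ψ*, C_φ] = 0. -/
open Filter MeasureTheory Metric Set
open scoped ComplexInnerProductSpace Topology

noncomputable section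

section Aux

/-- Norm of a point of `ℂ²` in terms of components. -/
lemma norm_two (x : EuclideanSpace ℂ (Fin 2)) :
    ‖x‖ = Real.sqrt (‖x 0‖ ^ 2 + ‖x 1‖ ^ 2) := by
  rw [EuclideanSpace.norm_eq, Fin.sum_univ_two]

lemma contract_mem_ball {z : EuclideanSpace ℂ (Fin 2)} (hz : z ∈ Ball 2)
    {w : EuclideanSpace ℂ (Fin 2)} (h0 : w 0 = z 0) {c : ℂ} (hc : 1 ≤ ‖c‖)
    (h1 : w 1 = z 1 / c) : w ∈ Ball 2 := by
  rw [mem_ball_zero_iff] at hz ⊢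
  rw [norm_two] at hz ⊢
  refine lt_of_le_of_lt ?_ hz
  apply Real.sqrt_le_sqrt
  gcongr
  · rw [h0]
  · rw [h1, norm_div]
    exact div_le_self (norm_nonneg _) hc

end Aux

/-- Let `φ(z₁,z₂) = (z₁, z₂/2)` and `ψ(z₁,z₂) = (z₁, z₂/3)`, linear
fractional self-maps of `B₂` (the Krein adjoint of `ψ` is `σ = ψ`).  On the Dirichlet space
`𝒟(B₂)` the commutator `[C_ψ*, C_φ]` is the zero operator, even though `φ ∘ σ = σ ∘ φ` and
`‖φ‖_∞ = ‖ψ‖_∞ = 1`. -/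
theorem dirichlet_commutator_zero_example
    (S : DirichletSpace 2)
    (φ ψ : EuclideanSpace ℂ (Fin 2) → EuclideanSpace ℂ (Fin 2))
    (hφdef : ∀ z : EuclideanSpace ℂ (Fin 2), φ z 0 = z 0 ∧ φ z 1 = z 1 / 2)
    (hψdef : ∀ z : EuclideanSpace ℂ (Fin 2), ψ z 0 = z 0 ∧ ψ z 1 = z 1 / 3)
    (Cφ Cψ : S.H →L[ℂ] S.H)
    (hCφ : S.IsCompositionOperator φ Cφ) (hCψ : S.IsCompositionOperator ψ Cψ) :
    (ContinuousLinearMap.adjoint Cψ).comp Cφ - Cφ.comp (ContinuousLinearMap.adjoint Cψ) = 0 ∧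
    (∀ z, φ (ψ z) = ψ (φ z)) ∧
    supNorm φ = 1 ∧ supNorm ψ = 1 := by
  
  -- components of points, ball membership facts
  have hφball : ∀ {z : EuclideanSpace ℂ (Fin 2)}, z ∈ Ball 2 → φ z ∈ Ball 2 := by
    intro z hz
    exact contract_mem_ball hz (hφdef z).1 (c := 2) (by norm_num) (hφdef z).2
  have hψball : ∀ {z : EuclideanSpace ℂ (Fin 2)}, z ∈ Ball 2 → ψ z ∈ Ball 2 := by
    intro z hz
    exact contract_mem_ball hz (hψdef z).1 (c := 3) (by norm_num) (hψdef z).2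
  -- commutation of the symbols
  have hcomm : ∀ z, φ (ψ z) = ψ (φ z) := by
    intro z
    ext i
    fin_cases i
    · show φ (ψ z) 0 = ψ (φ z) 0
      rw [(hφdef (ψ z)).1, (hψdef z).1, (hψdef (φ z)).1, (hφdef z).1]
    · show φ (ψ z) 1 = ψ (φ z) 1
      rw [(hφdef (ψ z)).2, (hψdef z).2, (hψdef (φ z)).2, (hφdef z).2]
      ring
  -- the inner-product symmetry ⟪v, ψ z⟫ = ⟪ψ v, z⟫
  have hinner : ∀ v z : EuclideanSpace ℂ (Fin 2), (⟪v, ψ z⟫ : ℂ) = ⟪ψ v, z⟫ := by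
    intro v z
    rw [PiLp.inner_apply, PiLp.inner_apply, Fin.sum_univ_two, Fin.sum_univ_two]
    rw [(hψdef z).1, (hψdef z).2, (hψdef v).1, (hψdef v).2]
    simp only [RCLike.inner_apply, map_div₀]
    rw [show (starRingEnd ℂ) 3 = 3 from map_ofNat _ 3]
    ring
  -- Cψ sends kernels to kernels
  have hker : ∀ v ∈ Ball 2, Cψ (S.kernel v) = S.kernel (ψ v) := by
    intro v hv
    apply S.eval_injective
    intro z hz
    rw [hCψ _ z hz, S.eval_kernel v hv (ψ z) (hψball hz),
      S.eval_kernel (ψ v) (hψball hv) z hz, hinner]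
  -- Cψ is self-adjoint
  have hadj : ContinuousLinearMap.adjoint Cψ = Cψ := by
    ext f
    apply S.eval_injective
    intro v hv
    have h1 : S.eval ((ContinuousLinearMap.adjoint Cψ) f) v
        = ⟪S.kernel v, (ContinuousLinearMap.adjoint Cψ) f⟫ :=
      (S.reproducing _ v hv).symm
    rw [h1, ContinuousLinearMap.adjoint_inner_right, hker v hv,
      S.reproducing f (ψ v) (hψball hv), hCψ f v hv]
  have hCC : Cψ.comp Cφ = Cφ.comp Cψ := by
    ext f
    apply S.eval_injective
    intro z hz
    rw [ContinuousLinearMap.comp_apply, ContinuousLinearMap.comp_apply,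
      hCψ _ z hz, hCφ _ (ψ z) (hψball hz), hCφ _ z hz, hCψ _ (φ z) (hφball hz), hcomm]
  -- sup-norm computation
  have hsup : ∀ (χ : EuclideanSpace ℂ (Fin 2) → EuclideanSpace ℂ (Fin 2)),
      (∀ z : EuclideanSpace ℂ (Fin 2), χ z 0 = z 0) →
      (∀ z ∈ Ball 2, χ z ∈ Ball 2) → supNorm χ = 1 := by
    intro χ h0 hball
    have hne : ((fun z => ‖χ z‖) '' Ball 2).Nonempty :=
      ⟨‖χ 0‖, ⟨0, by simp, rfl⟩⟩
    have hub : ∀ x ∈ (fun z => ‖χ z‖) '' Ball 2, x ≤ 1 := by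
      rintro x ⟨z, hz, rfl⟩
      exact le_of_lt (mem_ball_zero_iff.mp (hball z hz))
    have hbdd : BddAbove ((fun z => ‖χ z‖) '' Ball 2) := ⟨1, hub⟩
    have hle : supNorm χ ≤ 1 := csSup_le hne hub
    have hge : ∀ r : ℝ, 0 ≤ r → r < 1 → r ≤ supNorm χ := by
      intro r hr0 hr1
      set z : EuclideanSpace ℂ (Fin 2) :=
        (WithLp.equiv 2 (Fin 2 → ℂ)).symm ![(r : ℂ), 0] with hzdef
      have hz0 : z 0 = (r : ℂ) := rfl
      have hz1 : z 1 = 0 := rfl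
      have hznorm : ‖z‖ = r := by
        rw [norm_two, hz0, hz1]
        simp [Complex.norm_real, abs_of_nonneg hr0, Real.sqrt_sq hr0]
      have hzball : z ∈ Ball 2 := mem_ball_zero_iff.mpr (by rw [hznorm]; exact hr1)
      have hχz : r ≤ ‖χ z‖ := by
        rw [norm_two, h0 z, hz0]
        calc r = Real.sqrt (‖(r : ℂ)‖ ^ 2) := by
                simp [Complex.norm_real, abs_of_nonneg hr0, Real.sqrt_sq hr0]
          _ ≤ _ := Real.sqrt_le_sqrt (by nlinarith [norm_nonneg (χ z 1)])
      calc r ≤ ‖χ z‖ := hχz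
        _ ≤ supNorm χ := le_csSup hbdd ⟨z, hzball, rfl⟩
    have h0le : (0:ℝ) ≤ supNorm χ := hge 0 le_rfl one_pos
    by_contra hcon
    push_neg at hcon
    rcases lt_or_ge (supNorm χ) 1 with hlt | hge1
    · have := hge ((supNorm χ + 1) / 2) (by linarith) (by linarith)
      linarith
    · exact hcon (le_antisymm hle hge1)
  refine ⟨?_, hcomm, hsup φ (fun z => (hφdef z).1) (fun z hz => hφball hz),
    hsup ψ (fun z => (hψdef z).1) (fun z hz => hψball hz)⟩
  rw [hadj, hCC, sub_self]
end
end
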